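/- For matrices A ∈ ℝ^{d×n} and B ∈ ℝ^{d×m} with d ≤ min{n,m}, if the spectral norms satisfy ‖A‖_σ ≤ α and ‖B‖_σ ≤ α, then ‖A‖_* + ‖B‖_* − ‖[A,B]‖_* ≤ (2−√2) α d. -/

import Mathlib

/-!
With `S = A Aᵀ` and `T = B Bᵀ` we have `[A, B] [A, B]ᵀ = S + T`, so the core is
`tr √S + tr √T ≤ √2 tr √(S + T)`. It comes from the trace AM-GM inequality
`2 tr √S ≤ tr (H⁻¹ S) + tr H`, valid for every positive definite `H`: adding it for `S` and `T`
with `H ≈ √((S + T) / 2)` gives `√2 tr √(S + T)` on the right. Since both nuclear norms are at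
most `α d`, the defect `‖A‖_* + ‖B‖_* - ‖[A, B]‖_*` is at most `(1 - 1/√2) · 2αd`.
-/

open Matrix BigOperators

/-- The singular values of a real `d × n` matrix, defined as the square roots of the
eigenvalues of `M * Mᴴ`. -/
noncomputable def singularValues {d : ℕ} {n : Type*} [Fintype n]
    (M : Matrix (Fin d) n ℝ) : Fin d → ℝ :=
  fun i => Real.sqrt ((Matrix.isHermitian_mul_conjTranspose_self M).eigenvalues i)

/-- The nuclear norm (sum of singular values). -/
noncomputable def nuclearNorm {d : ℕ} {n : Type*} [Fintype n]
    (M : Matrix (Fin d) n ℝ) : ℝ :=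
  ∑ i, singularValues M i

/-- The column space of a matrix: the span of its columns. -/
def colSpace {d : ℕ} {n : Type*} (M : Matrix (Fin d) n ℝ) : Submodule ℝ (Fin d → ℝ) :=
  Submodule.span ℝ (Set.range fun j => fun i => M i j)

open scoped MatrixOrder Topology
open Filter

lemma div_add_two_mul_sqrt_half_add_le (x t : ℝ) (hx : 0 ≤ x) (ht : 0 < t) :
    x / (√(x / 2) + t) + 2 * (√(x / 2) + t) ≤ 2 * √2 * √x + 2 * t := by
  set s := √(x / 2) with hs
  have hs0 : 0 ≤ s := Real.sqrt_nonneg _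
  have hx2 : x = 2 * s ^ 2 := by rw [hs, Real.sq_sqrt (by positivity)]; ring
  have hroot : √2 * √x = 2 * s := by
    rw [← Real.sqrt_mul zero_le_two, hx2, show 2 * (2 * s ^ 2) = (2 * s) ^ 2 by ring,
      Real.sqrt_sq (by positivity)]
  have hdiv : x / (s + t) ≤ 2 * s := by
    rw [div_le_iff₀ (by positivity)]
    nlinarith
  linarith

namespace Matrix

variable {n : Type*} [Fintype n] [DecidableEq n]

lemma IsHermitian.trace_cfc {𝕜 : Type*} [RCLike 𝕜] {A : Matrix n n 𝕜} (hA : A.IsHermitian)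
    (f : ℝ → ℝ) : (cfc f A).trace = ∑ i, (f (hA.eigenvalues i) : 𝕜) := by
  rw [hA.cfc_eq, IsHermitian.cfc, Unitary.conjStarAlgAut_apply, trace_mul_cycle,
    Unitary.coe_star_mul_self, one_mul, trace_diagonal]
  rfl

lemma continuousOn_spectrum {𝕜 : Type*} [RCLike 𝕜] (A : Matrix n n 𝕜) (f : ℝ → ℝ) :
    ContinuousOn f (spectrum ℝ A) :=
  A.finite_real_spectrum.continuousOn f

lemma PosSemidef.cfc_sqrt_mul_self {S : Matrix n n ℝ} (hS : S.PosSemidef) :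
    cfc Real.sqrt S * cfc Real.sqrt S = S := by
  rw [← cfc_mul _ _ S (S.continuousOn_spectrum _) (S.continuousOn_spectrum _)]
  conv_rhs => rw [← cfc_id' ℝ S hS.1.isSelfAdjoint]
  refine cfc_congr fun x hx => Real.mul_self_sqrt ?_
  rw [hS.1.spectrum_real_eq_range_eigenvalues] at hx
  obtain ⟨i, rfl⟩ := hx
  exact hS.eigenvalues_nonneg i

/-- Trace form of `2 p ≤ p² / h + h`: expand `tr ((P - H)ᴴ G (P - H)) ≥ 0` with `G = H⁻¹`. -/
lemma two_mul_trace_le_trace_mul_add_trace {P G H : Matrix n n ℝ} (hP : P.IsHermitian)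
    (hG : G.PosSemidef) (hH : H.IsHermitian) (hGH : G * H = 1) :
    2 * P.trace ≤ (G * (P * P)).trace + H.trace := by
  have hHG : H * G = 1 := mul_eq_one_comm.mp hGH
  have hsq := (hG.conjTranspose_mul_mul_same (P - H)).trace_nonneg
  have hexpand : (P - H)ᴴ * G * (P - H) = P * G * P - P * (G * H) - H * G * P + H * (G * H) := by
    rw [conjTranspose_sub, hP.eq, hH.eq]
    noncomm_ring
  rw [hexpand, hGH, hHG, mul_one, one_mul, mul_one, trace_add, trace_sub, trace_sub,
    trace_mul_cycle, trace_mul_comm] at hsq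
  linarith

lemma PosSemidef.two_mul_sum_sqrt_eigenvalues_le {S G H : Matrix n n ℝ} (hS : S.PosSemidef)
    (hG : G.PosSemidef) (hH : H.IsHermitian) (hGH : G * H = 1) :
    2 * ∑ i, √(hS.1.eigenvalues i) ≤ (G * S).trace + H.trace := by
  have hP : (cfc Real.sqrt S).IsHermitian := cfc_predicate Real.sqrt S
  have := two_mul_trace_le_trace_mul_add_trace hP hG hH hGH
  rwa [hS.cfc_sqrt_mul_self, hS.1.trace_cfc] at this

/-- The weight is `H = √(R / 2) + t`; the `+ t` keeps it invertible when `R` is singular. -/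
lemma PosSemidef.sum_sqrt_eigenvalues_add_le_add {S T R : Matrix n n ℝ} (hS : S.PosSemidef)
    (hT : T.PosSemidef) (hR : R.IsHermitian) (hSTR : S + T = R) {t : ℝ} (ht : 0 < t) :
    ∑ i, √(hS.1.eigenvalues i) + ∑ i, √(hT.1.eigenvalues i) ≤
      √2 * ∑ i, √(hR.eigenvalues i) + Fintype.card n * t := by
  set f : ℝ → ℝ := fun x => √(x / 2) + t
  have hf : ∀ x, 0 < f x := fun x => by positivity
  have hGH : cfc (fun x => (f x)⁻¹) R * cfc f R = 1 := by
    rw [← cfc_mul _ _ R (R.continuousOn_spectrum _) (R.continuousOn_spectrum _),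
      cfc_congr fun x _ => inv_mul_cancel₀ (hf x).ne', cfc_const_one ℝ R hR.isSelfAdjoint]
  have hG : (cfc (fun x => (f x)⁻¹) R).PosSemidef :=
    nonneg_iff_posSemidef.mp (cfc_nonneg fun x _ => (inv_pos.mpr (hf x)).le)
  have hH : (cfc f R).IsHermitian := cfc_predicate f R
  have hGR : cfc (fun x => (f x)⁻¹) R * R = cfc (fun x => x / f x) R := by
    calc cfc (fun x => (f x)⁻¹) R * R = cfc (fun x => (f x)⁻¹) R * cfc (fun x => x) R := by
          rw [cfc_id' ℝ R hR.isSelfAdjoint]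
      _ = cfc (fun x => x / f x) R := by
          rw [← cfc_mul _ _ R (R.continuousOn_spectrum _) (R.continuousOn_spectrum _)]
          simp only [inv_mul_eq_div]
  have hGtrace : (cfc (fun x => (f x)⁻¹) R * S).trace + (cfc (fun x => (f x)⁻¹) R * T).trace =
      ∑ i, hR.eigenvalues i / f (hR.eigenvalues i) := by
    rw [← trace_add, ← Matrix.mul_add, hSTR, hGR, hR.trace_cfc]
    rfl
  have hHtrace : (cfc f R).trace = ∑ i, f (hR.eigenvalues i) := hR.trace_cfc f
  have hRpsd : R.PosSemidef := hSTR ▸ hS.add hT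
  have hbound : ∑ i, (hR.eigenvalues i / f (hR.eigenvalues i) + 2 * f (hR.eigenvalues i)) ≤
      ∑ i, (2 * √2 * √(hR.eigenvalues i) + 2 * t) :=
    Finset.sum_le_sum fun i _ =>
      div_add_two_mul_sqrt_half_add_le _ t (hRpsd.eigenvalues_nonneg i) ht
  rw [Finset.sum_add_distrib, Finset.sum_add_distrib, ← Finset.mul_sum, ← Finset.mul_sum,
    Finset.sum_const, Finset.card_univ, nsmul_eq_mul] at hbound
  have := hS.two_mul_sum_sqrt_eigenvalues_le hG hH hGH
  have := hT.two_mul_sum_sqrt_eigenvalues_le hG hH hGH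
  linarith

theorem PosSemidef.sum_sqrt_eigenvalues_add_le {S T R : Matrix n n ℝ} (hS : S.PosSemidef)
    (hT : T.PosSemidef) (hR : R.IsHermitian) (hSTR : S + T = R) :
    ∑ i, √(hS.1.eigenvalues i) + ∑ i, √(hT.1.eigenvalues i) ≤ √2 * ∑ i, √(hR.eigenvalues i) := by
  have hlim : Tendsto (fun t : ℝ => √2 * ∑ i, √(hR.eigenvalues i) + Fintype.card n * t)
      (𝓝[>] 0) (𝓝 (√2 * ∑ i, √(hR.eigenvalues i))) :=
    (Continuous.tendsto' (by fun_prop) 0 _ (by simp)).mono_left nhdsWithin_le_nhds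
  exact ge_of_tendsto hlim (eventually_nhdsWithin_of_forall fun t ht =>
    hS.sum_sqrt_eigenvalues_add_le_add hT hR hSTR ht)

end Matrix

lemma nuclearNorm_add_nuclearNorm_le_sqrt_two_mul {d : ℕ} {n m : Type*} [Fintype n] [Fintype m]
    (A : Matrix (Fin d) n ℝ) (B : Matrix (Fin d) m ℝ) :
    nuclearNorm A + nuclearNorm B ≤ √2 * nuclearNorm (fromCols A B) :=
  (posSemidef_self_mul_conjTranspose A).sum_sqrt_eigenvalues_add_le
    (posSemidef_self_mul_conjTranspose B) (isHermitian_mul_conjTranspose_self _)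
    (by rw [conjTranspose_fromCols_eq_fromRows_conjTranspose, fromCols_mul_fromRows])

lemma nuclearNorm_le_of_singularValues_le {d : ℕ} {n : Type*} [Fintype n]
    {M : Matrix (Fin d) n ℝ} {α : ℝ} (hM : ∀ i, singularValues M i ≤ α) :
    nuclearNorm M ≤ d * α := by
  simpa [nuclearNorm] using Finset.sum_le_card_nsmul Finset.univ _ α fun i _ => hM i

theorem transferability_upper_bound_general {d n m : ℕ} {α : ℝ}
    (A : Matrix (Fin d) (Fin n) ℝ) (B : Matrix (Fin d) (Fin m) ℝ)
    (hA : ∀ i, singularValues A i ≤ α) (hB : ∀ i, singularValues B i ≤ α) :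
    nuclearNorm A + nuclearNorm B - nuclearNorm (Matrix.fromCols A B) ≤
      (2 - Real.sqrt 2) * α * d := by
  have hsum := nuclearNorm_add_nuclearNorm_le_sqrt_two_mul A B
  have hA' := nuclearNorm_le_of_singularValues_le hA
  have hB' := nuclearNorm_le_of_singularValues_le hB
  have hsqrt2 : √2 * √2 = 2 := Real.mul_self_sqrt zero_le_two
  have hsqrt2_ge : 1 ≤ √2 := Real.one_le_sqrt.mpr one_le_two
  refine le_of_mul_le_mul_left ?_ (by positivity : 0 < √2)
  calc √2 * (nuclearNorm A + nuclearNorm B - nuclearNorm (fromCols A B))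
      ≤ (√2 - 1) * (nuclearNorm A + nuclearNorm B) := by linarith
    _ ≤ (√2 - 1) * (2 * (d * α)) := by gcongr; linarith
    _ = √2 * ((2 - √2) * α * d) := by linear_combination (α * d) * hsqrt2

theorem transferability_upper_bound {d n m : ℕ} {α : ℝ}
    (A : Matrix (Fin d) (Fin n) ℝ) (B : Matrix (Fin d) (Fin m) ℝ)
    (hdn : d ≤ n) (hdm : d ≤ m) (hα : 0 < α)
    (hA : ∀ i, singularValues A i ≤ α) (hB : ∀ i, singularValues B i ≤ α) :
    nuclearNorm A + nuclearNorm B - nuclearNorm (Matrix.fromCols A B) ≤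
      (2 - Real.sqrt 2) * α * d :=
  transferability_upper_bound_general A B hA hB
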